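/- arXiv:1310.6891 — 4 statements merged into one kernel-verified Lean document; each statement's English description precedes it below -/
import Mathlib

section
/- Let K be an LEC-field (Schanuel's Condition is not assumed) and let f(z) = λ₁E(μ₁z) + λ₂E(μ₂z) with λ₁, λ₂ ∈ K nonzero and μ₁ ≠ μ₂. If Z(f) contains infinitely many elements of the image of ℚ in K, then there exists a positive integer N such that every element of Z(f) lying in the image of ℚ is of the form m/N with m in the image of ℤ, i.e. N·x lies in the image of ℤ for every rational zero x of f. -/
/-- An LEC-field structure on an algebraically closed field `K` of characteristic zero:
an exponential map `E` which is a homomorphism from `(K,+)` onto `(Kˣ,·)` whose kernel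
is the infinite cyclic group generated by `τ`. -/
structure LEC (K : Type*) [Field K] [IsAlgClosed K] [CharZero K] where
  E : K → K
  E_zero : E 0 = 1
  E_add : ∀ x y : K, E (x + y) = E x * E y
  E_surj : ∀ w : K, w ≠ 0 → ∃ z : K, E z = w
  τ : K
  τ_ne_zero : τ ≠ 0
  E_eq_one_iff : ∀ x : K, E x = 1 ↔ ∃ k : ℤ, x = k * τ

/-- The transcendence degree over `ℚ` of (the subfield of `K` generated by) a subset `s` of `K`:
the supremum of the cardinalities of algebraically independent subsets of `s`. -/
noncomputable def trdegQ {K : Type*} [Field K] [CharZero K] (s : Set K) : Cardinal :=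
  ⨆ t : {t : Set K // t ⊆ s ∧ AlgebraicIndependent ℚ ((↑) : t → K)}, Cardinal.mk t.1

/-- Schanuel's Condition for an LEC-field. -/
def SchanuelCondition {K : Type*} [Field K] [IsAlgClosed K] [CharZero K] (L : LEC K) : Prop :=
  ∀ (n : ℕ) (α : Fin n → K),
    (Module.finrank ℚ (Submodule.span ℚ (Set.range α)) : Cardinal) ≤
      trdegQ (Set.range α ∪ L.E '' Set.range α)

/-- over an LEC-field (no Schanuel Condition assumed), if the zero set of
`f(z) = λ₁E(μ₁z) + λ₂E(μ₂z)` (with `λ₁, λ₂ ≠ 0`, `μ₁ ≠ μ₂`) contains infinitely many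
elements of the image of ℚ in `K`, then there is a positive integer `N` such that `N·x` lies
in the image of ℤ for every rational zero `x` of `f`. -/
theorem stmt9 {K : Type*} [Field K] [IsAlgClosed K] [CharZero K] (L : LEC K)
    (lam1 lam2 mu1 mu2 : K) (hlam1 : lam1 ≠ 0) (hlam2 : lam2 ≠ 0) (hmu : mu1 ≠ mu2)
    (hinf : {z : K | lam1 * L.E (mu1 * z) + lam2 * L.E (mu2 * z) = 0 ∧
        z ∈ Set.range ((↑) : ℚ → K)}.Infinite) :
    ∃ N : ℕ, 0 < N ∧ ∀ z : K, lam1 * L.E (mu1 * z) + lam2 * L.E (mu2 * z) = 0 →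
      z ∈ Set.range ((↑) : ℚ → K) → ∃ m : ℤ, (N : K) * z = (m : K) := by
  have hEne : ∀ x : K, L.E x ≠ 0 := by
    intro x hx
    have h := L.E_add x (-x)
    rw [add_neg_cancel, L.E_zero, hx, zero_mul] at h
    exact one_ne_zero h
  have hmu' : mu1 - mu2 ≠ 0 := sub_ne_zero.mpr hmu
  -- every zero has the same value of E((mu1-mu2)z)
  have ratio : ∀ z : K, lam1 * L.E (mu1 * z) + lam2 * L.E (mu2 * z) = 0 →
      L.E ((mu1 - mu2) * z) * lam1 = -lam2 := by
    intro z hz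
    have h1 : L.E ((mu1 - mu2) * z) * L.E (mu2 * z) = L.E (mu1 * z) := by
      rw [← L.E_add]; congr 1; ring
    have h2 : lam1 * L.E (mu1 * z) = -lam2 * L.E (mu2 * z) := by
      linear_combination hz
    apply mul_right_cancel₀ (hEne (mu2 * z))
    calc L.E ((mu1 - mu2) * z) * lam1 * L.E (mu2 * z)
        = lam1 * (L.E ((mu1 - mu2) * z) * L.E (mu2 * z)) := by ring
      _ = lam1 * L.E (mu1 * z) := by rw [h1]
      _ = -lam2 * L.E (mu2 * z) := h2
  have key : ∀ z z' : K, lam1 * L.E (mu1 * z) + lam2 * L.E (mu2 * z) = 0 →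
      lam1 * L.E (mu1 * z') + lam2 * L.E (mu2 * z') = 0 →
      ∃ k : ℤ, (mu1 - mu2) * (z - z') = k * L.τ := by
    intro z z' hz hz'
    have heq : L.E ((mu1 - mu2) * z) = L.E ((mu1 - mu2) * z') :=
      mul_right_cancel₀ hlam1 ((ratio z hz).trans (ratio z' hz').symm)
    apply (L.E_eq_one_iff _).mp
    have h1 : L.E ((mu1 - mu2) * (z - z')) * L.E ((mu1 - mu2) * z') =
        L.E ((mu1 - mu2) * z) := by
      rw [← L.E_add]; congr 1; ring
    rw [heq] at h1
    exact mul_right_cancel₀ (hEne _) (by rw [one_mul]; exact h1)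
  -- pick two distinct rational zeros
  obtain ⟨z1, hz1, z2, hz2, hz12⟩ := hinf.nontrivial
  obtain ⟨hf1, q1, hq1⟩ := hz1
  obtain ⟨hf2, q2, hq2⟩ := hz2
  obtain ⟨k0, hk0⟩ := key z1 z2 hf1 hf2
  have hk0ne : (k0 : ℚ) ≠ 0 := by
    intro h
    have : k0 = 0 := by exact_mod_cast h
    rw [this] at hk0
    simp only [Int.cast_zero, zero_mul] at hk0
    rcases mul_eq_zero.mp hk0 with h | h
    · exact hmu' h
    · exact hz12 (sub_eq_zero.mp h)
  set r : ℚ := (q1 - q2) / k0 with hr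
  refine ⟨q1.den * r.den, Nat.mul_pos q1.pos r.pos, ?_⟩
  intro z hfz hzQ
  obtain ⟨q, hq⟩ := hzQ
  obtain ⟨k, hk⟩ := key z z1 hfz hf1
  -- derive the relation in ℚ
  have hKrel : ((k0 : ℚ) * (q - q1) : K) = ((k : ℚ) * (q1 - q2) : K) := by
    push_cast
    have h1 : (mu1 - mu2) * ((q : K) - q1) * k0 = (k : K) * ((mu1 - mu2) * ((q1 : K) - q2)) := by
      rw [hq1, hq2, hq]
      linear_combination (k0 : K) * hk - (k : K) * hk0
    have h2 : (mu1 - mu2) * (((q : K) - q1) * k0 - (k : K) * ((q1 : K) - q2)) = 0 := by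
      linear_combination h1
    have h3 := (mul_eq_zero.mp h2).resolve_left hmu'
    linear_combination h3
  have hQrel : (k0 : ℚ) * (q - q1) = (k : ℚ) * (q1 - q2) := by
    exact_mod_cast hKrel
  have hqval : q = q1 + k * r := by
    rw [hr]
    field_simp
    linear_combination hQrel
  have hd1 : (q1.den : ℚ) * q1 = q1.num := by
    rw [mul_comm]; exact_mod_cast Rat.mul_den_eq_num q1
  have hd2 : (r.den : ℚ) * r = r.num := by
    rw [mul_comm]; exact_mod_cast Rat.mul_den_eq_num r
  refine ⟨(r.den : ℤ) * q1.num + k * (q1.den : ℤ) * r.num, ?_⟩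
  rw [← hq]
  have hQm : ((q1.den * r.den : ℕ) : ℚ) * q =
      (((r.den : ℤ) * q1.num + k * (q1.den : ℤ) * r.num : ℤ) : ℚ) := by
    push_cast
    linear_combination ((q1.den : ℚ) * r.den) * hqval + (r.den : ℚ) * hd1 +
      ((k : ℚ) * q1.den) * hd2
  exact_mod_cast congrArg (fun x : ℚ => (x : K)) hQm
end

section
/- Let K be an LEC-field, let f(z) = λ₁E(μ₁z) + λ₂E(μ₂z) with λ₁, λ₂ ∈ K nonzero and μ₁ ≠ μ₂, and let α ∈ K be nonzero and not a root of unity. Suppose Z(f) ∩ {α^k : k ∈ ℤ} is infinite. If for some nonzero integer r the power α^r lies in the image of ℚ in K, then α^r lies in the image of ℤ in K or α^{−r} lies in the image of ℤ in K. -/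
/-- If `q^m` lies in a fixed rational arithmetic progression for arbitrarily large `m`,
then `q` has denominator 1. -/
lemma ratA (q b c : ℚ) (M : Set ℤ) (hM : ∀ N : ℕ, ∃ m ∈ M, (N : ℤ) ≤ m)
    (h : ∀ m ∈ M, ∃ n : ℤ, q ^ m = b + n * c) : q.den = 1 := by
  by_contra hden
  have h2 : 2 ≤ q.den := by have := q.den_pos; omega
  set D : ℕ := b.den * c.den with hD
  obtain ⟨m, hmM, hm⟩ := hM D
  obtain ⟨n, hn⟩ := h m hmM
  have hm0 : (0 : ℤ) ≤ m := le_trans (by positivity) hm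
  have hqe : q ^ m = q ^ m.toNat := by
    rw [← zpow_natCast, Int.toNat_of_nonneg hm0]
  have hdvd : (q ^ m.toNat).den ∣ D := by
    rw [← hqe, hn]
    refine (Rat.add_den_dvd b _).trans ?_
    refine Nat.mul_dvd_mul_left b.den ?_
    have := Rat.mul_den_dvd (n : ℚ) c
    simpa using this
  have hle : q.den ^ m.toNat ≤ D := by
    have : (q ^ m.toNat).den = q.den ^ m.toNat := Rat.den_pow q m.toNat
    rw [this] at hdvd
    exact Nat.le_of_dvd (by positivity) hdvd
  have h1 : 2 ^ m.toNat ≤ q.den ^ m.toNat := Nat.pow_le_pow_left h2 _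
  have h3 : D ≤ m.toNat := by omega
  have := Nat.lt_two_pow_self (n := m.toNat)
  omega

lemma ratB (q b c : ℚ) (M : Set ℤ) (hM : M.Infinite)
    (h : ∀ m ∈ M, ∃ n : ℤ, q ^ m = b + n * c) : q.den = 1 ∨ q⁻¹.den = 1 := by
  by_cases hpos : ∀ N : ℕ, ∃ m ∈ M, (N : ℤ) ≤ m
  · exact Or.inl (ratA q b c M hpos h)
  · right
    push_neg at hpos
    obtain ⟨N, hN⟩ := hpos
    apply ratA q⁻¹ b c ((fun m => -m) '' M)
    · intro N'
      by_contra hc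
      push_neg at hc
      apply hM
      apply Set.Finite.subset (Set.finite_Ioo (-(N' : ℤ)) (N : ℤ))
      intro m hm
      have h1 := hN m hm
      have h2 := hc (-m) ⟨m, hm, rfl⟩
      exact ⟨by omega, h1⟩
    · rintro m' ⟨m, hm, rfl⟩
      obtain ⟨n, hn⟩ := h m hm
      exact ⟨n, by rw [zpow_neg, inv_zpow, inv_inv]; exact hn⟩

lemma pigeon (s : Set ℤ) (hs : s.Infinite) (n : ℕ) (hn : 0 < n) :
    ∃ j : ℤ, {k ∈ s | k % (n : ℤ) = j}.Infinite := by
  by_contra h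
  push_neg at h
  apply hs
  have hsub : s ⊆ ⋃ j ∈ Set.Ico (0 : ℤ) (n : ℤ), {k ∈ s | k % (n : ℤ) = j} := by
    intro k hk
    exact Set.mem_biUnion
      ⟨Int.emod_nonneg k (by exact_mod_cast hn.ne'), Int.emod_lt_of_pos k (by exact_mod_cast hn)⟩
      ⟨hk, rfl⟩
  exact ((Set.finite_Ico _ _).biUnion fun j _ => h j).subset hsub

/-- over an LEC-field, let `f(z) = λ₁E(μ₁z) + λ₂E(μ₂z)` with `λ₁, λ₂ ≠ 0` and
`μ₁ ≠ μ₂`, and let `α ≠ 0` be not a root of unity with `Z(f) ∩ ⟨α⟩` infinite. If `α^r` is in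
the image of ℚ for some nonzero integer `r`, then `α^r` or `α^(-r)` is in the image of ℤ. -/

theorem stmt10 {K : Type*} [Field K] [IsAlgClosed K] [CharZero K] (L : LEC K)
    (lam1 lam2 mu1 mu2 : K) (hlam1 : lam1 ≠ 0) (hlam2 : lam2 ≠ 0) (hmu : mu1 ≠ mu2)
    (α : K) (hα : α ≠ 0) (hαu : ¬ ∃ n : ℕ, 1 ≤ n ∧ α ^ n = 1)
    (hinf : {z : K | lam1 * L.E (mu1 * z) + lam2 * L.E (mu2 * z) = 0 ∧
        ∃ k : ℤ, z = α ^ k}.Infinite)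
    (r : ℤ) (hr : r ≠ 0) (hrat : ∃ q : ℚ, α ^ r = (q : K)) :
    (∃ m : ℤ, α ^ r = (m : K)) ∨ (∃ m : ℤ, α ^ (-r) = (m : K)) := by
  -- basic facts about E
  have Einv : ∀ x : K, L.E x * L.E (-x) = 1 := by
    intro x; rw [← L.E_add]; simp [L.E_zero]
  have Ene : ∀ x : K, L.E x ≠ 0 := by
    intro x h; have := Einv x; rw [h, zero_mul] at this; exact zero_ne_one this
  -- powers of α are injective
  have hzpow : ∀ n : ℤ, α ^ n = 1 → n = 0 := by
    intro n hn
    by_contra h0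
    apply hαu
    have hn' : α ^ ((n.natAbs : ℤ)) = 1 := by
      rcases Int.natAbs_eq n with h | h
      · rw [← h]; exact hn
      · rw [h, zpow_neg] at hn; exact inv_eq_one.mp hn
    refine ⟨n.natAbs, ?_, ?_⟩
    · have := Int.natAbs_eq_zero.not.mpr h0; omega
    · rw [← zpow_natCast]; exact hn'
  have hinj : ∀ a b : ℤ, α ^ a = α ^ b → a = b := by
    intro a b h
    have : α ^ (a - b) = 1 := by
      rw [zpow_sub₀ hα, h, div_self (zpow_ne_zero b hα)]
    have := hzpow _ this; omega
  -- the common difference d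
  have hμ : mu1 - mu2 ≠ 0 := sub_ne_zero.mpr hmu
  set d : K := L.τ / (mu1 - mu2) with hd_def
  have hd : d ≠ 0 := div_ne_zero L.τ_ne_zero hμ
  -- difference of two zeros is an integer multiple of d
  have key : ∀ z z' : K, lam1 * L.E (mu1 * z) + lam2 * L.E (mu2 * z) = 0 →
      lam1 * L.E (mu1 * z') + lam2 * L.E (mu2 * z') = 0 → ∃ n : ℤ, z - z' = n * d := by
    intro z z' hz hz'
    have h1 : lam1 * L.E (mu1 * z) = -(lam2 * L.E (mu2 * z)) :=
      eq_neg_of_add_eq_zero_left hz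
    have h1' : lam1 * L.E (mu1 * z') = -(lam2 * L.E (mu2 * z')) :=
      eq_neg_of_add_eq_zero_left hz'
    have hmain : L.E (mu1 * z) * L.E (mu2 * z') = L.E (mu1 * z') * L.E (mu2 * z) := by
      apply mul_left_cancel₀ hlam1
      calc lam1 * (L.E (mu1 * z) * L.E (mu2 * z'))
          = (lam1 * L.E (mu1 * z)) * L.E (mu2 * z') := by ring
        _ = -(lam2 * L.E (mu2 * z)) * L.E (mu2 * z') := by rw [h1]
        _ = -(lam2 * L.E (mu2 * z')) * L.E (mu2 * z) := by ring
        _ = (lam1 * L.E (mu1 * z')) * L.E (mu2 * z) := by rw [h1']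
        _ = lam1 * (L.E (mu1 * z') * L.E (mu2 * z)) := by ring
    have hE1 : L.E ((mu1 - mu2) * (z - z')) = 1 := by
      have hsplit : L.E ((mu1 - mu2) * (z - z')) * (L.E (mu2 * z) * L.E (mu1 * z'))
          = L.E (mu1 * z) * L.E (mu2 * z') := by
        rw [← L.E_add, ← L.E_add, ← L.E_add]
        congr 1
        ring
      have h2 := hsplit.trans hmain
      have hX : L.E (mu2 * z) * L.E (mu1 * z') ≠ 0 := mul_ne_zero (Ene _) (Ene _)
      apply mul_right_cancel₀ hX
      rw [one_mul, h2]
      ring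
    obtain ⟨k, hk⟩ := (L.E_eq_one_iff _).mp hE1
    refine ⟨k, ?_⟩
    rw [hd_def]
    field_simp
    linear_combination hk
  -- the set of exponents
  set T : Set ℤ := {k : ℤ | lam1 * L.E (mu1 * α ^ k) + lam2 * L.E (mu2 * α ^ k) = 0} with hT_def
  have hT : T.Infinite := by
    by_contra hfin
    rw [Set.not_infinite] at hfin
    apply hinf
    have hsub : {z : K | lam1 * L.E (mu1 * z) + lam2 * L.E (mu2 * z) = 0 ∧
        ∃ k : ℤ, z = α ^ k} ⊆ (fun k : ℤ => α ^ k) '' T := by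
      rintro z ⟨hz, k, rfl⟩
      exact ⟨k, hz, rfl⟩
    exact (hfin.image _).subset hsub
  -- pigeonhole: a residue class mod r with infinitely many exponents
  obtain ⟨j, hj⟩ := pigeon T hT r.natAbs (Int.natAbs_pos.mpr hr)
  obtain ⟨k₀, hk₀T, hk₀j⟩ := hj.nonempty
  set M : Set ℤ := {m : ℤ | k₀ + r * m ∈ T} with hM_def
  have hM : M.Infinite := by
    apply Set.Infinite.of_image (fun m => k₀ + r * m)
    apply Set.Infinite.mono ?_ hj
    rintro k ⟨hkT, hkj⟩
    have hdvd : r ∣ k - k₀ := by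
      apply Int.natAbs_dvd.mp
      apply Int.dvd_of_emod_eq_zero
      apply Int.emod_eq_emod_iff_emod_sub_eq_zero.mp
      rw [hkj, hk₀j]
    obtain ⟨m, hm⟩ := hdvd
    refine ⟨m, ?_, by show k₀ + r * m = k; omega⟩
    show k₀ + r * m ∈ T
    rw [show k₀ + r * m = k by omega]
    exact hkT
  obtain ⟨q, hq⟩ := hrat
  have hq0 : q ≠ 0 := by
    intro h
    apply zpow_ne_zero r hα
    rw [hq, h, Rat.cast_zero]
  have hpow : ∀ m : ℤ, α ^ (k₀ + r * m) = α ^ k₀ * ((q : K)) ^ m := by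
    intro m; rw [zpow_add₀ hα, zpow_mul, hq]
  have hqinj : ∀ a b : ℤ, (q : K) ^ a = (q : K) ^ b → a = b := by
    intro a b h
    have : α ^ (r * a) = α ^ (r * b) := by rw [zpow_mul, zpow_mul, hq, h]
    exact mul_left_cancel₀ hr (hinj _ _ this)
  obtain ⟨m₁, hm₁, m₂, hm₂, hne⟩ := hM.nontrivial
  have hdiff : ∀ m ∈ M, ∃ n : ℤ, α ^ k₀ * ((q : K) ^ m - (q : K) ^ m₁) = n * d := by
    intro m hm
    obtain ⟨n, hn⟩ := key (α ^ (k₀ + r * m)) (α ^ (k₀ + r * m₁)) hm hm₁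
    refine ⟨n, ?_⟩
    rw [← hn, hpow, hpow]; ring
  obtain ⟨n₀, hn₀⟩ := hdiff m₂ hm₂
  have hn₀0 : n₀ ≠ 0 := by
    intro h
    rw [h, Int.cast_zero, zero_mul] at hn₀
    rcases mul_eq_zero.mp hn₀ with h' | h'
    · exact zpow_ne_zero k₀ hα h'
    · exact hne ((hqinj _ _ (sub_eq_zero.mp h')).symm)
  have hn₀Q : (n₀ : ℚ) ≠ 0 := Int.cast_ne_zero.mpr hn₀0
  set b : ℚ := q ^ m₁ with hb_def
  set c : ℚ := (q ^ m₂ - q ^ m₁) / (n₀ : ℚ) with hc_def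
  have hprog : ∀ m ∈ M, ∃ n : ℤ, q ^ m = b + n * c := by
    intro m hm
    obtain ⟨n, hn⟩ := hdiff m hm
    refine ⟨n, ?_⟩
    have hK : ((q : K) ^ m - (q : K) ^ m₁) * (n₀ : K) = (n : K) * ((q : K) ^ m₂ - (q : K) ^ m₁) := by
      apply mul_left_cancel₀ (zpow_ne_zero k₀ hα)
      calc α ^ k₀ * (((q : K) ^ m - (q : K) ^ m₁) * (n₀ : K))
          = (α ^ k₀ * ((q : K) ^ m - (q : K) ^ m₁)) * (n₀ : K) := by ring
        _ = ((n : K) * d) * (n₀ : K) := by rw [hn]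
        _ = (n : K) * ((n₀ : K) * d) := by ring
        _ = (n : K) * (α ^ k₀ * ((q : K) ^ m₂ - (q : K) ^ m₁)) := by rw [← hn₀]
        _ = α ^ k₀ * ((n : K) * ((q : K) ^ m₂ - (q : K) ^ m₁)) := by ring
    have hQ : (q ^ m - q ^ m₁) * (n₀ : ℚ) = (n : ℚ) * (q ^ m₂ - q ^ m₁) := by
      apply Rat.cast_injective (α := K)
      push_cast
      exact hK
    rw [hb_def, hc_def]
    field_simp
    linear_combination hQ
  rcases ratB q b c M hM hprog with h | h
  · left
    refine ⟨q.num, ?_⟩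
    rw [hq]
    exact_mod_cast (Rat.coe_int_num_of_den_eq_one h).symm
  · right
    refine ⟨q⁻¹.num, ?_⟩
    rw [zpow_neg, hq, ← Rat.cast_inv]
    exact_mod_cast (Rat.coe_int_num_of_den_eq_one h).symm
end

section
/- Let F be a number field and let A, B, α ∈ F with α ≠ 0. If there are infinitely many positive integers m such that α^m = A + k·B for some k ∈ ℤ, then α is an algebraic integer (i.e. α lies in the ring of integers of F). -/
/-- let `F` be a number field and `A, B, α ∈ F` with `α ≠ 0`. If there are
infinitely many positive integers `m` such that `α^m = A + k·B` for some `k ∈ ℤ`, then `α`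
is an algebraic integer. -/
theorem stmt13 {F : Type*} [Field F] [NumberField F] (A B α : F) (hα : α ≠ 0)
    (h : {m : ℕ | 0 < m ∧ ∃ k : ℤ, α ^ m = A + (k : F) * B}.Infinite) :
    IsIntegral ℤ α := by
  classical
  set S : Set ℕ := {m : ℕ | 0 < m ∧ ∃ k : ℤ, α ^ m = A + (k : F) * B} with hS
  set M0 : Submodule ℤ F := Submodule.span ℤ ({A, B} : Set F) with hM0
  have hfg : M0.FG := ⟨{A, B}, by simp [hM0]⟩
  have hmem : ∀ m ∈ S, α ^ m ∈ M0 := by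
    rintro m ⟨-, k, hk⟩
    rw [hk]
    have hA : A ∈ M0 := Submodule.subset_span (by simp)
    have hB : B ∈ M0 := Submodule.subset_span (by simp)
    have hkB : (k : F) * B = k • B := by simp
    rw [hkB]
    exact M0.add_mem hA (M0.smul_mem k hB)
  set T : Submodule ℤ F := Submodule.span ℤ ((fun m => α ^ m) '' S) with hT
  have hTle : T ≤ M0 := Submodule.span_le.2 (by rintro - ⟨m, hm, rfl⟩; exact hmem m hm)
  haveI : IsNoetherian ℤ M0 := isNoetherian_of_fg_of_noetherian M0 hfg
  have hTfg : T.FG := by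
    have h1 : (T.comap M0.subtype).FG := IsNoetherian.noetherian _
    have h2 : Submodule.map M0.subtype (T.comap M0.subtype) = T := by
      rw [Submodule.map_comap_subtype]
      exact inf_eq_right.2 hTle
    exact h2 ▸ h1.map _
  obtain ⟨t, ht⟩ := hTfg
  -- each generator lies in the span of finitely many powers
  have hgen : ∀ x ∈ (t : Set F), ∃ E : Finset ℕ, ↑E ⊆ S ∧
      x ∈ Submodule.span ℤ ((fun m => α ^ m) '' ↑E) := by
    intro x hx
    have hxT : x ∈ T := ht ▸ Submodule.subset_span hx
    obtain ⟨U, hU, hxU⟩ := Submodule.mem_span_finite_of_mem_span hxT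
    choose f hf1 hf2 using fun (u : U) => hU u.2
    refine ⟨U.attach.image f, ?_, ?_⟩
    · intro e he
      simp only [Finset.coe_image, Set.mem_image] at he
      obtain ⟨u, -, rfl⟩ := he
      exact hf1 u
    · have hle : Submodule.span ℤ (U : Set F) ≤
          Submodule.span ℤ ((fun m => α ^ m) '' ↑(U.attach.image f)) := by
        refine Submodule.span_le.2 ?_
        intro u hu
        refine Submodule.subset_span ⟨f ⟨u, hu⟩, ?_, (hf2 ⟨u, hu⟩)⟩
        simp only [Finset.coe_image, Set.mem_image]
        exact ⟨⟨u, hu⟩, by simp, rfl⟩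
      exact hle hxU
  choose E hES hxE using hgen
  set E0 : Finset ℕ := t.attach.biUnion (fun x => E x.1 x.2) with hE0
  have hE0S : ↑E0 ⊆ S := by
    intro e he
    simp only [hE0, Finset.coe_biUnion, Set.mem_iUnion] at he
    obtain ⟨x, -, hx⟩ := he
    exact hES x.1 x.2 hx
  have hTle2 : T ≤ Submodule.span ℤ ((fun e => α ^ e) '' ↑E0) := by
    rw [← ht, Submodule.span_le]
    intro x hx
    refine Submodule.span_mono (Set.image_mono ?_) (hxE x hx)
    intro e he
    simp only [hE0, Finset.coe_biUnion, Set.mem_iUnion]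
    exact ⟨⟨x, hx⟩, Finset.mem_attach _ _, he⟩
  -- pick m in S larger than everything in E0
  obtain ⟨n, hn⟩ : ∃ n, ∀ e ∈ E0, e < n := ⟨(E0.sup id) + 1, fun e he =>
    Nat.lt_succ_of_le (Finset.le_sup (f := id) he)⟩
  obtain ⟨m, hmS, hmgt⟩ := h.exists_gt n
  have hαm : α ^ m ∈ Submodule.span ℤ ((fun e => α ^ e) '' ↑E0) :=
    hTle2 (Submodule.subset_span ⟨m, hmS, rfl⟩)
  rw [Finsupp.mem_span_image_iff_linearCombination] at hαm
  obtain ⟨l, hlsupp, hlsum⟩ := hαm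
  refine ⟨Polynomial.X ^ m - ∑ e ∈ l.support, Polynomial.C (l e) * Polynomial.X ^ e, ?_, ?_⟩
  · apply Polynomial.monic_X_pow_sub
    refine lt_of_le_of_lt (Polynomial.degree_sum_le _ _) ?_
    refine Finset.sup_lt_iff (by exact_mod_cast WithBot.bot_lt_coe m) |>.2 ?_
    intro e he
    refine lt_of_le_of_lt (Polynomial.degree_C_mul_X_pow_le e _) ?_
    exact_mod_cast Nat.lt_trans (hn e (hlsupp he)) hmgt
  · rw [Polynomial.eval₂_sub, Polynomial.eval₂_X_pow, Polynomial.eval₂_finset_sum]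
    rw [sub_eq_zero, ← hlsum, Finsupp.linearCombination_apply, Finsupp.sum]
    refine Finset.sum_congr rfl (fun e he => ?_)
    rw [Polynomial.eval₂_mul, Polynomial.eval₂_C, Polynomial.eval₂_X_pow, zsmul_eq_mul]
    simp
end

section
/- Let c ∈ ℚ with c ≠ 0 and let x, y ∈ ℚ. Then y³ = c·x² if and only if there exists θ ∈ ℚ such that x = θ³·c⁻⁵ and y = θ²·c⁻³. -/
/-- for a nonzero rational `c` and rationals `x, y`, one has `y³ = c·x²` if and
only if `x = θ³·c⁻⁵` and `y = θ²·c⁻³` for some rational `θ`. -/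
theorem stmt14 (c x y : ℚ) (hc : c ≠ 0) :
    y ^ 3 = c * x ^ 2 ↔ ∃ θ : ℚ, x = θ ^ 3 * c ^ (-5 : ℤ) ∧ y = θ ^ 2 * c ^ (-3 : ℤ) := by
  have h5 : c ^ (-5 : ℤ) = (c ^ 5)⁻¹ := by
    rw [zpow_neg, show (5:ℤ) = ((5:ℕ):ℤ) from rfl, zpow_natCast]
  have h3 : c ^ (-3 : ℤ) = (c ^ 3)⁻¹ := by
    rw [zpow_neg, show (3:ℤ) = ((3:ℕ):ℤ) from rfl, zpow_natCast]
  rw [h5, h3]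
  constructor
  · intro h
    by_cases hy : y = 0
    · refine ⟨0, ?_, ?_⟩ <;> simp [hy] at h ⊢ <;> simp_all
    · refine ⟨x * c ^ 2 / y, ?_, ?_⟩
      · field_simp
        linear_combination x * h
      · field_simp
        linear_combination h
  · rintro ⟨θ, rfl, rfl⟩
    field_simp
end
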